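/- arXiv:2010.13121 — 7 statements merged into one kernel-verified Lean document; each statement's English description precedes it below -/
import Mathlib

section
/- In every state (f_k, pred_k) of an update run, every node y with pred_k(y) = some x satisfies f_k(y) ≤ f_k(x) + w(x, y). -/
/-- A single value/predecessor update of FAPE's Dijkstra-like reachability
propagation: an edge `(x, y)` is chosen, `f' y = f x + w x y` with
`f' y > f y`, `pred' y = some x`, and everything else is unchanged. -/
def UpdateStep {V : Type*} (w : V → V → ℤ)
    (f : V → ℤ) (pred : V → Option V)
    (f' : V → ℤ) (pred' : V → Option V) : Prop :=
  ∃ x y : V, f' y = f x + w x y ∧ f y < f' y ∧ pred' y = some x ∧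
    ∀ z : V, z ≠ y → f' z = f z ∧ pred' z = pred z

theorem stmt_1 {V : Type*} [Fintype V] (w : V → V → ℤ) (K : ℕ)
    (f : ℕ → V → ℤ) (pred : ℕ → V → Option V)
    (h0 : ∀ y, pred 0 y = none)
    (hstep : ∀ k < K, UpdateStep w (f k) (pred k) (f (k+1)) (pred (k+1))) :
    ∀ k ≤ K, ∀ y x : V, pred k y = some x → f k y ≤ f k x + w x y := by
  intro k
  induction k with
  | zero => intro _ y x h; simp [h0] at h
  | succ k ih =>
    intro hk y x hp
    obtain ⟨x0, y0, hf, hlt, hp0, hrest⟩ := hstep k (by omega)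
    by_cases hy : y = y0
    · subst hy
      rw [hp0] at hp
      injection hp with hx
      subst hx
      by_cases hxy : x0 = y
      · subst hxy
        have : 0 < w x0 x0 := by omega
        omega
      · rw [(hrest x0 hxy).1]; omega
    · obtain ⟨hfz, hpz⟩ := hrest y hy
      rw [hpz] at hp
      have := ih (by omega) y x hp
      by_cases hxy : x = y0
      · subst hxy; rw [hfz]; omega
      · rw [hfz, (hrest x hxy).1]; omega
end

section
/- Let (f, pred) be the final state of an update run. Then every predecessor cycle has strictly positive total weight: for any n ≥ 1 and any cyclic sequence of nodes y_0, y_1, …, y_n = y_0 such that pred(y_{i+1}) = some y_i for every i < n, one has Σ_{i=0}^{n−1} w(y_i, y_{i+1}) > 0. -/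
/-- Labels are nondecreasing over an update run. -/
lemma f_mono {V : Type*} (w : V → V → ℤ) (K : ℕ)
    (f : ℕ → V → ℤ) (pred : ℕ → V → Option V)
    (hstep : ∀ k < K, UpdateStep w (f k) (pred k) (f (k+1)) (pred (k+1)))
    {a b : ℕ} (hab : a ≤ b) (hbK : b ≤ K) (z : V) : f a z ≤ f b z := by
  induction b with
  | zero => simp_all
  | succ b ih =>
    rcases Nat.lt_or_ge a (b+1) with h | h
    · have hb : b < K := by omega
      obtain ⟨x0, y0, hf, hlt, hp, hother⟩ := hstep b hb
      have h1 : f a z ≤ f b z := ih (by omega) (by omega)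
      rcases eq_or_ne z y0 with rfl | hne
      · exact h1.trans hlt.le
      · exact h1.trans_eq (hother z hne).1.symm
    · have : a = b + 1 := by omega
      simp [this]

/-- Last-update witness: if at time `K` node `z` has predecessor `u`, then
there is a step `t < K` with `f K z = f t u + w u z` and `f t z < f K z`. -/
lemma last_update {V : Type*} (w : V → V → ℤ) (K : ℕ)
    (f : ℕ → V → ℤ) (pred : ℕ → V → Option V)
    (h0 : ∀ y, pred 0 y = none)
    (hstep : ∀ k < K, UpdateStep w (f k) (pred k) (f (k+1)) (pred (k+1))) :
    ∀ z u : V, pred K z = some u →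
      ∃ t, t < K ∧ f K z = f t u + w u z ∧ f t z < f K z := by
  induction K with
  | zero => intro z u h; simp [h0 z] at h
  | succ K ih =>
    intro z u h
    obtain ⟨x0, y0, hf, hlt, hp, hother⟩ := hstep K (by omega)
    rcases eq_or_ne z y0 with rfl | hne
    · have hu : u = x0 := by rw [hp] at h; exact (Option.some_inj.mp h).symm
      exact ⟨K, by omega, by rw [hu]; exact hf, hlt⟩
    · have hz := hother z hne
      have h' : pred K z = some u := by rw [← hz.2]; exact h
      obtain ⟨t, htK, heq, hlt'⟩ := ih (fun k hk => hstep k (by omega)) z u h'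
      exact ⟨t, by omega, by rw [hz.1]; exact heq, by rw [hz.1]; exact hlt'⟩

/-- In the final state of an update run, every predecessor cycle has strictly
positive total weight. -/
theorem stmt_2 {V : Type*} [Fintype V] (w : V → V → ℤ) (K : ℕ)
    (f : ℕ → V → ℤ) (pred : ℕ → V → Option V)
    (h0 : ∀ y, pred 0 y = none)
    (hstep : ∀ k < K, UpdateStep w (f k) (pred k) (f (k+1)) (pred (k+1)))
    (n : ℕ) (hn : 1 ≤ n) (y : ℕ → V) (hcyc : y n = y 0)
    (hpred : ∀ i < n, pred K (y (i+1)) = some (y i)) :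
    0 < ∑ i ∈ Finset.range n, w (y i) (y (i+1)) := by
  -- choose a last-update time for each head of a cycle edge
  have hlu := last_update w K f pred h0 hstep
  choose t htK heq hflt using fun i (hi : i < n) =>
    hlu (y (i+1)) (y i) (hpred i hi)
  -- the non-strict inequality along every edge
  have hle : ∀ i < n, f K (y (i+1)) - f K (y i) ≤ w (y i) (y (i+1)) := by
    intro i hi
    have := f_mono w K f pred hstep (le_of_lt (htK i hi)) le_rfl (y i)
    have h2 := heq i hi
    omega
  -- pick the edge whose head was updated earliest
  obtain ⟨j, hj, hmin⟩ : ∃ j, ∃ hj : j < n, ∀ i (hi : i < n), t j hj ≤ t i hi := by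
    obtain ⟨j, hj, hmin⟩ := Finset.exists_min_image (Finset.range n)
      (fun i => if hi : i < n then t i hi else 0) ⟨0, by simp; omega⟩
    rw [Finset.mem_range] at hj
    refine ⟨j, hj, fun i hi => ?_⟩
    have := hmin i (Finset.mem_range.mpr hi)
    simpa [dif_pos hj, dif_pos hi] using this
  -- the tail of edge j: it is the head of the previous edge
  set p : ℕ := if j = 0 then n - 1 else j - 1 with hp
  have hpn : p < n := by simp only [hp]; split <;> omega
  have hpy : y (p + 1) = y j := by
    simp only [hp]; split
    · subst ‹j = 0›; rw [show n - 1 + 1 = n by omega]; exact hcyc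
    · congr 1; omega
  -- strict inequality along edge j
  have hstrict : f K (y (j+1)) - f K (y j) < w (y j) (y (j+1)) := by
    have h1 : f (t j hj) (y j) < f K (y j) := by
      have h2 : f (t p hpn) (y (p+1)) < f K (y (p+1)) := hflt p hpn
      rw [hpy] at h2
      have h3 : f (t j hj) (y j) ≤ f (t p hpn) (y j) :=
        f_mono w K f pred hstep (hmin p hpn) (le_of_lt (htK p hpn)) (y j)
      omega
    have h2 := heq j hj
    omega
  -- telescoping sum
  have htel : ∑ i ∈ Finset.range n, (f K (y (i+1)) - f K (y i)) = 0 := by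
    rw [Finset.sum_range_sub (fun i => f K (y i)), hcyc, sub_self]
  calc (0:ℤ) = ∑ i ∈ Finset.range n, (f K (y (i+1)) - f K (y i)) := htel.symm
  _ < ∑ i ∈ Finset.range n, w (y i) (y (i+1)) :=
    Finset.sum_lt_sum (fun i hi => hle i (Finset.mem_range.mp hi))
      ⟨j, Finset.mem_range.mpr hj, hstrict⟩
end

section
/- Suppose every condition of every action of the relaxed planning problem is a before-condition (all delays δ ≤ 0). Let R* ⊆ A be the least set of actions such that a ∈ R* whenever for every condition (δ, f) ∈ cond(a) either (t₀, f) ∈ I for some t₀ or f = eff(a') for some a' ∈ R*. Then an action is reachable if and only if it belongs to R* (temporal reachability coincides with classical delete-free reachability on problems without after-conditions). -/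
/-- `(S, t)` is a schedule of the relaxed planning problem `(cond, eff, I)`:
every timed condition `(δ, f)` of every action `a ∈ S` is supported either by
an initial timed fluent `(t₀, f) ∈ I` with `t₀ ≤ t a + δ`, or by an action
`a' ∈ S` with `eff a' = f` and `t a' + 1 ≤ t a + δ`. -/
def IsSchedule {F A : Type*} (cond : A → Finset (ℤ × F)) (eff : A → F)
    (I : Finset (ℤ × F)) (S : Finset A) (t : A → ℤ) : Prop :=
  ∀ a ∈ S, ∀ p ∈ cond a,
    (∃ t0 : ℤ, (t0, p.2) ∈ I ∧ t0 ≤ t a + p.1) ∨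
    (∃ a' ∈ S, eff a' = p.2 ∧ t a' + 1 ≤ t a + p.1)

/-- An action is reachable if it belongs to some schedule. -/
def ReachableAction {F A : Type*} (cond : A → Finset (ℤ × F)) (eff : A → F)
    (I : Finset (ℤ × F)) (a : A) : Prop :=
  ∃ (S : Finset A) (t : A → ℤ), IsSchedule cond eff I S t ∧ a ∈ S

/-- A set of actions `R` is closed under classical delete-free reachability:
`a ∈ R` whenever each condition of `a` is on a fluent that is an initial
fluent or the effect of an action already in `R`. -/
def DeleteFreeClosed {F A : Type*} (cond : A → Finset (ℤ × F)) (eff : A → F)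
    (I : Finset (ℤ × F)) (R : Set A) : Prop :=
  ∀ a : A, (∀ p ∈ cond a, (∃ t0 : ℤ, (t0, p.2) ∈ I) ∨ ∃ a' ∈ R, eff a' = p.2) →
    a ∈ R

/-- If every condition of every action is a before-condition (`δ ≤ 0`), then an
action is (temporally) reachable iff it belongs to the least delete-free closed
set `R*`: temporal reachability coincides with classical delete-free
reachability on problems without after-conditions. -/
theorem stmt_5 {F A : Type*} [Fintype F] [Fintype A]
    (cond : A → Finset (ℤ × F)) (eff : A → F) (I : Finset (ℤ × F))
    (hbefore : ∀ a : A, ∀ p ∈ cond a, p.1 ≤ 0)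
    (Rstar : Set A)
    (hclosed : DeleteFreeClosed cond eff I Rstar)
    (hleast : ∀ R : Set A, DeleteFreeClosed cond eff I R → Rstar ⊆ R) :
    ∀ a : A, ReachableAction cond eff I a ↔ a ∈ Rstar := by
  classical
  intro a
  constructor
  · rintro ⟨S, t, hS, haS⟩
    have hne : (S.image t).Nonempty := ⟨t a, Finset.mem_image_of_mem t haS⟩
    set m := (S.image t).min' hne with hm
    have key : ∀ N : ℕ, ∀ b ∈ S, t b ≤ m + N → b ∈ Rstar := by
      intro N
      induction N with
      | zero =>
        intro b hb htb
        apply hclosed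
        intro p hp
        rcases hS b hb p hp with ⟨t0, h1, _⟩ | ⟨a', ha'S, heq, hlt⟩
        · exact Or.inl ⟨t0, h1⟩
        · exfalso
          have h2 : m ≤ t a' := Finset.min'_le _ _ (Finset.mem_image_of_mem t ha'S)
          have hp0 := hbefore b p hp
          omega
      | succ N ih =>
        intro b hb htb
        apply hclosed
        intro p hp
        rcases hS b hb p hp with ⟨t0, h1, _⟩ | ⟨a', ha'S, heq, hlt⟩
        · exact Or.inl ⟨t0, h1⟩
        · refine Or.inr ⟨a', ?_, heq⟩
          have hp0 := hbefore b p hp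
          refine ih a' ha'S ?_
          push_cast at htb ⊢
          omega
    have hma : m ≤ t a := Finset.min'_le _ _ (Finset.mem_image_of_mem t haS)
    exact key (t a - m).toNat a haS (by omega)
  · intro haR
    set Cop : Set A → Set A := fun R =>
      {b | ∀ p ∈ cond b, (∃ t0 : ℤ, (t0, p.2) ∈ I) ∨ ∃ a' ∈ R, eff a' = p.2} with hCdef
    have Cmono : Monotone Cop := by
      intro R1 R2 hR b hb p hp
      rcases hb p hp with h | ⟨a', h1, h2⟩
      · exact Or.inl h
      · exact Or.inr ⟨a', hR h1, h2⟩
    set Rn : ℕ → Set A := fun n => Cop^[n] ∅ with hRndef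
    have hRnsucc : ∀ n, Rn (n + 1) = Cop (Rn n) := fun n =>
      Function.iterate_succ_apply' Cop n ∅
    have hRnmono : Monotone Rn := by
      apply monotone_nat_of_le_succ
      intro n
      induction n with
      | zero =>
        intro x hx
        simp [hRndef] at hx
      | succ k ih =>
        rw [hRnsucc, hRnsucc]
        exact Cmono ih
    have hRnR : ∀ n, Rn n ⊆ Rstar := by
      intro n
      induction n with
      | zero =>
        intro x hx
        simp [hRndef] at hx
      | succ k ih =>
        rw [hRnsucc]
        intro b hb
        apply hclosed
        intro p hp
        rcases hb p hp with h | ⟨a', h1, h2⟩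
        · exact Or.inl h
        · exact Or.inr ⟨a', ih h1, h2⟩
    have hRR : Rstar ⊆ ⋃ n, Rn n := by
      apply hleast
      intro b hb
      have h : ∀ p : ℤ × F, ∃ n : ℕ, p ∈ cond b →
          ((∃ t0 : ℤ, (t0, p.2) ∈ I) ∨ ∃ a' ∈ Rn n, eff a' = p.2) := by
        intro p
        by_cases hp : p ∈ cond b
        · rcases hb p hp with h | ⟨a', h1, h2⟩
          · exact ⟨0, fun _ => Or.inl h⟩
          · rcases Set.mem_iUnion.1 h1 with ⟨n, hn⟩
            exact ⟨n, fun _ => Or.inr ⟨a', hn, h2⟩⟩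
        · exact ⟨0, fun h => absurd h hp⟩
      choose nf hnf using h
      have hb' : b ∈ Rn ((cond b).sup nf + 1) := by
        rw [hRnsucc]
        intro p hp
        rcases hnf p hp with h | ⟨a', h1, h2⟩
        · exact Or.inl h
        · exact Or.inr ⟨a', hRnmono (Finset.le_sup hp) h1, h2⟩
      exact Set.mem_iUnion.2 ⟨_, hb'⟩
    set D : ℕ := Finset.univ.sup (fun b : A => (cond b).sup fun p => (-p.1).toNat) with hDdef
    set c : ℤ := ((I.sup fun q => q.1.toNat : ℕ) : ℤ) + (D : ℤ) with hcdef
    set M : ℤ := (D : ℤ) + 1 with hMdef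
    set rk : A → ℕ := fun b => if h : ∃ n, b ∈ Rn n then Nat.find h else 0 with hrkdef
    set tt : A → ℤ := fun b => (rk b : ℤ) * M + c with httdef
    refine ⟨Finset.univ.filter (· ∈ Rstar), tt, ?_, by simp [haR]⟩
    intro b hb p hp
    have hbR : b ∈ Rstar := (Finset.mem_filter.1 hb).2
    have hbU : ∃ n, b ∈ Rn n := Set.mem_iUnion.1 (hRR hbR)
    have hrk : b ∈ Rn (rk b) := by
      simp only [hrkdef, dif_pos hbU]
      exact Nat.find_spec hbU
    have hrkpos : rk b ≠ 0 := by
      intro h0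
      rw [h0] at hrk
      simp [hRndef] at hrk
    obtain ⟨k, hk⟩ := Nat.exists_eq_succ_of_ne_zero hrkpos
    rw [hk, hRnsucc] at hrk
    have hdp : -p.1 ≤ (D : ℤ) := by
      have h1 : (-p.1).toNat ≤ D := by
        rw [hDdef]
        exact le_trans (Finset.le_sup (f := fun p : ℤ × F => (-p.1).toNat) hp)
          (Finset.le_sup (f := fun b : A => (cond b).sup fun p => (-p.1).toNat) (Finset.mem_univ b))
      have h2 := hbefore b p hp
      omega
    have hMpos : (0:ℤ) ≤ M := by simp [hMdef]; positivity
    rcases hrk p hp with ⟨t0, ht0⟩ | ⟨a', h1, h2⟩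
    · left
      refine ⟨t0, ht0, ?_⟩
      have hs1 : t0.toNat ≤ I.sup fun q => q.1.toNat :=
        Finset.le_sup (f := fun q : ℤ × F => q.1.toNat) ht0
      have hs2 : t0 ≤ (t0.toNat : ℤ) := Int.self_le_toNat t0
      have hs3 : ((t0.toNat : ℕ) : ℤ) ≤ ((I.sup fun q => q.1.toNat : ℕ) : ℤ) := by
        exact_mod_cast hs1
      have hs4 : (0:ℤ) ≤ (rk b : ℤ) * M := by positivity
      simp only [httdef]
      linarith
    · right
      have ha'R : a' ∈ Rstar := hRnR k h1
      refine ⟨a', by simp [ha'R], h2, ?_⟩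
      have hU' : ∃ n, a' ∈ Rn n := ⟨k, h1⟩
      have hrk' : rk a' ≤ k := by
        simp only [hrkdef, dif_pos hU']
        exact Nat.find_min' hU' h1
      have hle : ((rk a' : ℤ)) * M ≤ (k : ℤ) * M := by
        apply mul_le_mul_of_nonneg_right _ hMpos
        exact_mod_cast hrk'
      have hrkb : (rk b : ℤ) = (k : ℤ) + 1 := by exact_mod_cast congrArg Nat.cast hk
      simp only [httdef]
      rw [hrkb]
      have : (1:ℤ) ≤ M + p.1 := by simp only [hMdef]; omega
      nlinarith [hle, this]
end

section
/- Let Ω ⊆ A be a set of actions and for each a ∈ Ω let κ(a) = (δ_a, f_a) ∈ cond(a) be a designated condition such that: (i) no initial timed fluent of the form (t₀, f_a) belongs to I; (ii) every achiever of f_a belongs to Ω; and (iii) for every cyclic sequence a_1, …, a_n, a_{n+1} = a_1 of actions of Ω with eff(a_i) = f_{a_{i+1}} for all i, one has Σ_{i=1}^{n} (1 − δ_{a_{i+1}}) > 0 (there is no self-supporting causal loop among the designated conditions). Then no action of Ω is reachable, and no designated fluent f_a with a ∈ Ω is reachable. -/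
def ReachableFluent {F A : Type*} (cond : A → Finset (ℤ × F)) (eff : A → F)
    (I : Finset (ℤ × F)) (f : F) : Prop :=
  (∃ t0 : ℤ, (t0, f) ∈ I) ∨ ∃ a : A, eff a = f ∧ ReachableAction cond eff I a

/-- If a set of actions `Ω` has, for each `a ∈ Ω`, a designated condition
`(δd a, fd a)` such that no initial fluent supports `fd a`, all achievers of
`fd a` lie in `Ω`, and there is no self-supporting causal loop among the
designated conditions, then no action of `Ω` and no designated fluent is
reachable. -/
theorem stmt_6 {F A : Type*} [Fintype F] [Fintype A]
    (cond : A → Finset (ℤ × F)) (eff : A → F) (I : Finset (ℤ × F))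
    (Ω : Set A) (δd : A → ℤ) (fd : A → F)
    (hdes : ∀ a ∈ Ω, (δd a, fd a) ∈ cond a)
    (h1 : ∀ a ∈ Ω, ∀ t0 : ℤ, (t0, fd a) ∉ I)
    (h2 : ∀ a ∈ Ω, ∀ a' : A, eff a' = fd a → a' ∈ Ω)
    (h3 : ∀ n : ℕ, 1 ≤ n → ∀ b : ℕ → A, b n = b 0 → (∀ i ≤ n, b i ∈ Ω) →
      (∀ i < n, eff (b i) = fd (b (i+1))) →
      0 < ∑ i ∈ Finset.range n, (1 - δd (b (i+1)))) :
    (∀ a ∈ Ω, ¬ ReachableAction cond eff I a) ∧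
    (∀ a ∈ Ω, ¬ ReachableFluent cond eff I (fd a)) := by
  classical
  have main : ∀ a ∈ Ω, ¬ ReachableAction cond eff I a := by
    rintro a haΩ ⟨S, t, hS, haS⟩
    set P : A → Prop := fun x => x ∈ S ∧ x ∈ Ω with hP
    have key : ∀ x, P x → ∃ y, P y ∧ eff y = fd x ∧ t y + 1 ≤ t x + δd x := by
      rintro x ⟨hxS, hxΩ⟩
      rcases hS x hxS (δd x, fd x) (hdes x hxΩ) with ⟨t0, hI, _⟩ | ⟨a', ha'S, heff, hle⟩
      · exact absurd hI (h1 x hxΩ t0)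
      · exact ⟨a', ⟨ha'S, h2 x hxΩ a' heff⟩, heff, hle⟩
    let c : ℕ → {x : A // P x} := fun n =>
      Nat.rec ⟨a, haS, haΩ⟩ (fun _ p =>
        ⟨Classical.choose (key p.1 p.2),
         (Classical.choose_spec (key p.1 p.2)).1⟩) n
    have hc_eff : ∀ n, eff ((c (n+1)).1) = fd ((c n).1) := fun n =>
      (Classical.choose_spec (key (c n).1 (c n).2)).2.1
    have hc_t : ∀ n, t ((c (n+1)).1) + 1 ≤ t ((c n).1) + δd ((c n).1) := fun n =>
      (Classical.choose_spec (key (c n).1 (c n).2)).2.2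
    obtain ⟨i, j, hne, hij⟩ := Finite.exists_ne_map_eq_of_infinite c
    wlog hlt : i < j generalizing i j
    · exact this j i hne.symm hij.symm (by omega)
    have tele : ∀ m, t ((c (i+m)).1) ≤ t ((c i).1)
        - ∑ r ∈ Finset.range m, (1 - δd ((c (i+r)).1)) := by
      intro m
      induction m with
      | zero => simp
      | succ m ih =>
        have h := hc_t (i+m)
        rw [Finset.sum_range_succ]
        have h' : i + (m+1) = (i+m)+1 := by omega
        rw [h']
        linarith
    set n := j - i with hn
    have hn1 : 1 ≤ n := by omega
    have hij' : i + n = j := by omega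
    set b : ℕ → A := fun r => (c (j - r)).1 with hb
    have hb0 : b n = b 0 := by
      simp only [hb]
      rw [show j - n = i by omega, Nat.sub_zero, hij]
    have hbΩ : ∀ r ≤ n, b r ∈ Ω := fun r _ => (c (j - r)).2.2
    have hbeff : ∀ r < n, eff (b r) = fd (b (r+1)) := by
      intro r hr
      have h1' : j - r = (j - (r+1)) + 1 := by omega
      simp only [hb, h1']
      exact hc_eff _
    have hpos := h3 n hn1 b hb0 hbΩ hbeff
    have hsum : ∑ r ∈ Finset.range n, (1 - δd (b (r+1)))
        = ∑ r ∈ Finset.range n, (1 - δd ((c (i+r)).1)) := by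
      conv_rhs => rw [← Finset.sum_range_reflect]
      apply Finset.sum_congr rfl
      intro r hr
      simp only [Finset.mem_range] at hr
      simp only [hb]
      have : j - (r+1) = i + (n - 1 - r) := by omega
      rw [this]
    have htel := tele n
    rw [hij', hij] at htel
    rw [hsum] at hpos
    linarith
  refine ⟨main, ?_⟩
  rintro a haΩ (⟨t0, hI⟩ | ⟨a', heff, hre⟩)
  · exact h1 a haΩ t0 hI
  · exact main a' (h2 a haΩ a' heff) hre
end

section
/- Let a_1, …, a_n, a_{n+1} = a_1 be a self-supporting causal loop with a_1, …, a_n pairwise distinct (so Σ_{i=1}^{n} (1 − δ_{i+1}) ≤ 0, with designated conditions (δ_{i+1}, f_{i+1}) ∈ cond(a_{i+1}) and eff(a_i) = f_{i+1}), and suppose every condition of every a_i other than its designated loop condition is supported by an initial timed fluent, i.e., for every such condition (δ, φ) there is some (t₀, φ) ∈ I. Then there exists a schedule (S, t) with S = {a_1, …, a_n}; in particular every a_i and every fluent eff(a_i) is reachable. -/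
/-- A self-supporting causal loop of pairwise distinct actions, all of whose
non-designated conditions are supported by initial timed fluents, yields a
schedule consisting exactly of the actions of the loop; in particular all its
actions and effects are reachable. -/
theorem stmt_7 {F A : Type*} [Fintype F] [Fintype A] [DecidableEq A]
    (cond : A → Finset (ℤ × F)) (eff : A → F) (I : Finset (ℤ × F))
    (n : ℕ) (hn : 1 ≤ n) (a : ℕ → A) (δ : ℕ → ℤ) (fl : ℕ → F)
    (ha : a n = a 0)
    (hinj : ∀ i < n, ∀ j < n, a i = a j → i = j)
    (hloop : ∀ i < n, (δ (i+1), fl (i+1)) ∈ cond (a (i+1)) ∧ eff (a i) = fl (i+1))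
    (hlen : ∑ i ∈ Finset.range n, (1 - δ (i+1)) ≤ 0)
    (hother : ∀ i, 1 ≤ i → i ≤ n → ∀ p ∈ cond (a i), p ≠ (δ i, fl i) →
      ∃ t0 : ℤ, (t0, p.2) ∈ I) :
    ∃ t : A → ℤ, IsSchedule cond eff I ((Finset.range n).image a) t ∧
      (∀ i, 1 ≤ i → i ≤ n → ReachableAction cond eff I (a i)) ∧
      (∀ i, 1 ≤ i → i ≤ n → ReachableFluent cond eff I (eff (a i))) := by
  classical
  set T : ℕ → ℤ := fun i => ∑ j ∈ Finset.range i, (1 - δ (j+1)) with hT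
  have hTsucc : ∀ i, T (i+1) = T i + (1 - δ (i+1)) := fun i => Finset.sum_range_succ _ i
  have hT0 : T 0 = 0 := by simp [hT]
  set g : ℕ → ℤ × F → ℤ := fun i p =>
    if h : ∃ t0 : ℤ, (t0, p.2) ∈ I then h.choose - T (if i+1 = n then 0 else i+1) - p.1
    else 0 with hg
  set B : Finset ℤ := (Finset.range n).biUnion (fun i => (cond (a (i+1))).image (g i)) with hB
  set M : ℤ := ∑ x ∈ B, |x| with hM
  have hMB : ∀ x ∈ B, x ≤ M := by
    intro x hx
    calc x ≤ |x| := le_abs_self x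
    _ ≤ M := Finset.single_le_sum (fun y _ => abs_nonneg y) hx
  set S : Finset A := (Finset.range n).image a with hS
  set t : A → ℤ := fun x => if h : ∃ i, i < n ∧ a i = x then M + T (Nat.find h) else 0 with htdef
  have ht : ∀ j, j < n → t (a j) = M + T j := by
    intro j hj
    have h : ∃ i, i < n ∧ a i = a j := ⟨j, hj, rfl⟩
    have hspec := Nat.find_spec h
    have hfind : Nat.find h = j := hinj _ hspec.1 _ hj hspec.2
    simp only [htdef, dif_pos h, hfind]
  have hmem : ∀ j, j < n → a j ∈ S := by
    intro j hj
    exact Finset.mem_image.mpr ⟨j, Finset.mem_range.mpr hj, rfl⟩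
  have hsched : IsSchedule cond eff I S t := by
    intro x hx p hp
    obtain ⟨j, hj, rfl⟩ := Finset.mem_image.mp hx
    have hjn : j < n := Finset.mem_range.mp hj
    set i' : ℕ := if j = 0 then n else j with hi'
    have hi1 : 1 ≤ i' := by
      rcases Nat.eq_zero_or_pos j with h0 | h0
      · simp [hi', h0]; omega
      · simp [hi', Nat.pos_iff_ne_zero.mp h0]; omega
    have hin : i' ≤ n := by
      rcases Nat.eq_zero_or_pos j with h0 | h0
      · simp [hi', h0]
      · simp [hi', Nat.pos_iff_ne_zero.mp h0]; omega
    have hk : i' - 1 + 1 = i' := Nat.succ_pred_eq_of_pos hi1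
    have hprevlt : i' - 1 < n := by omega
    have hai : a i' = a j := by
      rcases Nat.eq_zero_or_pos j with h0 | h0
      · rw [hi', if_pos h0, h0, ha]
      · rw [hi', if_neg (Nat.pos_iff_ne_zero.mp h0)]
    have hTtime : T (i' - 1) + 1 ≤ T j + δ i' := by
      rcases Nat.eq_zero_or_pos j with h0 | h0
      · have hieq : i' = n := by simp [hi', h0]
        have h1 : T n = T (n-1) + (1 - δ n) := by
          have h := hTsucc (n-1)
          have e : n - 1 + 1 = n := by omega
          rwa [e] at h
        have h2 : T n ≤ 0 := hlen
        rw [h0, hT0, hieq]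
        omega
      · have hieq : i' = j := by simp [hi', Nat.pos_iff_ne_zero.mp h0]
        have h1 : T j = T (j-1) + (1 - δ j) := by
          have h := hTsucc (j-1)
          have e : j - 1 + 1 = j := by omega
          rwa [e] at h
        rw [hieq]
        omega
    by_cases hpd : p = (δ i', fl i')
    · right
      refine ⟨a (i' - 1), hmem _ hprevlt, ?_, ?_⟩
      · have := (hloop (i' - 1) hprevlt).2
        rw [hk] at this
        rw [this, hpd]
      · rw [ht _ hprevlt, ht _ hjn, hpd]
        simpa using by linarith [hTtime]
    · left
      have hpi : p ∈ cond (a i') := by rw [hai]; exact hp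
      have hex : ∃ t0 : ℤ, (t0, p.2) ∈ I := hother i' hi1 hin p hpi hpd
      have hgB : g (i' - 1) p ∈ B := by
        refine Finset.mem_biUnion.mpr ⟨i' - 1, Finset.mem_range.mpr hprevlt, ?_⟩
        refine Finset.mem_image.mpr ⟨p, ?_, rfl⟩
        rw [hk]; exact hpi
      have hgval : g (i' - 1) p = hex.choose - T j - p.1 := by
        rw [hg]
        simp only [dif_pos hex]
        congr 1
        rcases Nat.eq_zero_or_pos j with h0 | h0
        · have hieq : i' = n := by simp [hi', h0]
          rw [hk, hieq, if_pos rfl, h0]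
        · have hieq : i' = j := by simp [hi', Nat.pos_iff_ne_zero.mp h0]
          rw [hk, hieq, if_neg (by omega)]
      have hle := hMB _ hgB
      rw [hgval] at hle
      refine ⟨hex.choose, hex.choose_spec, ?_⟩
      rw [ht _ hjn]
      linarith
  have hra : ∀ i, 1 ≤ i → i ≤ n → ReachableAction cond eff I (a i) := by
    intro i h1 h2
    refine ⟨S, t, hsched, ?_⟩
    rcases eq_or_lt_of_le h2 with h | h
    · rw [h, ha]; exact hmem 0 (by omega)
    · exact hmem i h
  exact ⟨t, hsched, hra, fun i h1 h2 => Or.inr ⟨a i, rfl, hra i h1 h2⟩⟩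
end

section
/- Suppose every action a ∈ A has exactly one condition, cond(a) = {(δ_a, f_a)}. Then an action a is reachable if and only if there is a finite sequence of actions a = b_0, b_1, …, b_k with eff(b_{i+1}) = f_{b_i} for all i < k, such that one of the following holds: (a) b_0, …, b_k are pairwise distinct and (t₀, f_{b_k}) ∈ I for some t₀; or (b) b_0, …, b_{k−1} are pairwise distinct, b_k = b_j for some j < k, and Σ_{i=j}^{k−1} (1 − δ_{b_i}) ≤ 0 (the sequence of supporters ends in a self-supporting causal loop). -/
private lemma telescope_aux (g d : ℕ → ℤ) (lo hi : ℕ) (hle : lo ≤ hi)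
    (h : ∀ i, lo ≤ i → i < hi → g (i+1) + d i ≤ g i) :
    g hi + ∑ i ∈ Finset.Ico lo hi, d i ≤ g lo := by
  induction hi, hle using Nat.le_induction with
  | base => simp
  | succ m hm ih =>
    rw [Finset.sum_Ico_succ_top hm]
    have h1 : g (m+1) + d m ≤ g m := h m hm (Nat.lt_succ_self m)
    have h2 := ih (fun i hi1 hi2 => h i hi1 (hi2.trans (Nat.lt_succ_self m)))
    linarith

private lemma forward_aux {F A : Type*} [Fintype A]
    (cond : A → Finset (ℤ × F)) (eff : A → F) (I : Finset (ℤ × F))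
    (δc : A → ℤ) (fc : A → F)
    (hsingle : ∀ a : A, cond a = {(δc a, fc a)})
    (S : Finset A) (t : A → ℤ) (hS : IsSchedule cond eff I S t) (a : A) :
    ∀ (m n : ℕ) (b : ℕ → A), Fintype.card A ≤ n + m → b 0 = a →
      (∀ i ≤ n, b i ∈ S) → (∀ i < n, eff (b (i+1)) = fc (b i)) →
      (∀ i < n, t (b (i+1)) + 1 ≤ t (b i) + δc (b i)) →
      (∀ i ≤ n, ∀ j ≤ n, b i = b j → i = j) →
      ∃ (k : ℕ) (b : ℕ → A), b 0 = a ∧ (∀ i < k, eff (b (i+1)) = fc (b i)) ∧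
        (((∀ i ≤ k, ∀ j ≤ k, b i = b j → i = j) ∧ ∃ t0 : ℤ, (t0, fc (b k)) ∈ I) ∨
          ((∀ i < k, ∀ j < k, b i = b j → i = j) ∧
            ∃ j < k, b k = b j ∧ ∑ i ∈ Finset.Ico j k, (1 - δc (b i)) ≤ 0)) := by
  intro m
  induction m with
  | zero =>
    intro n b hcard _ _ _ _ hinj
    exfalso
    have hinj' : Function.Injective (fun i : Fin (n+1) => b i) := by
      intro i j hij
      exact Fin.ext (hinj i (Nat.lt_succ_iff.mp i.isLt) j (Nat.lt_succ_iff.mp j.isLt) hij)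
    have := Fintype.card_le_of_injective _ hinj'
    simp at this
    omega
  | succ m ih =>
    intro n b hcard hb0 hmem heff ht hinj
    have hbn := hS (b n) (hmem n le_rfl) (δc (b n), fc (b n)) (by rw [hsingle]; simp)
    rcases hbn with ⟨t0, ht0, _⟩ | ⟨a', ha'S, ha'eff, ha't⟩
    · exact ⟨n, b, hb0, heff, Or.inl ⟨hinj, t0, ht0⟩⟩
    · set b' : ℕ → A := Function.update b (n+1) a' with hb'
      have hb'eq : ∀ i ≤ n, b' i = b i := fun i hi =>
        Function.update_of_ne (by omega) _ _
      have hb'top : b' (n+1) = a' := Function.update_self _ _ _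
      have hb'0 : b' 0 = a := by rw [hb'eq 0 (Nat.zero_le n), hb0]
      have hb'eff : ∀ i < n+1, eff (b' (i+1)) = fc (b' i) := by
        intro i hi
        rw [hb'eq i (by omega)]
        rcases Nat.lt_or_ge i n with hin | hin
        · rw [hb'eq (i+1) (by omega)]; exact heff i hin
        · have : i = n := by omega
          subst this; rw [hb'top]; exact ha'eff
      have hb't : ∀ i < n+1, t (b' (i+1)) + 1 ≤ t (b' i) + δc (b' i) := by
        intro i hi
        rw [hb'eq i (by omega)]
        rcases Nat.lt_or_ge i n with hin | hin
        · rw [hb'eq (i+1) (by omega)]; exact ht i hin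
        · have : i = n := by omega
          subst this; rw [hb'top]; exact ha't
      by_cases hrep : ∃ j ≤ n, b j = a'
      · obtain ⟨j, hj, hbj⟩ := hrep
        refine ⟨n+1, b', hb'0, hb'eff, Or.inr ⟨?_, j, by omega, ?_, ?_⟩⟩
        · intro i hi j' hj' hij
          rw [hb'eq i (by omega), hb'eq j' (by omega)] at hij
          exact hinj i (by omega) j' (by omega) hij
        · rw [hb'top, hb'eq j hj, hbj]
        · have htel := telescope_aux (fun i => t (b' i)) (fun i => 1 - δc (b' i))
            j (n+1) (by omega) (by intro i hi1 hi2; have := hb't i hi2; simp; linarith)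
          have hsum : ∑ i ∈ Finset.Ico j (n+1), (1 - δc (b' i))
              = ∑ i ∈ Finset.Ico j (n+1), (1 - δc (Function.update b (n+1) a' i)) := rfl
          have hval : t (b' (n+1)) = t (b' j) := by
            rw [hb'top, hb'eq j hj, hbj]
          linarith
      · push_neg at hrep
        apply ih (n+1) b' (by omega) hb'0 ?_ hb'eff hb't ?_
        · intro i hi
          rcases Nat.lt_or_ge i (n+1) with hin | hin
          · rw [hb'eq i (by omega)]; exact hmem i (by omega)
          · have : i = n+1 := by omega
            subst this; rw [hb'top]; exact ha'S
        · intro i hi j hj hij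
          rcases Nat.lt_or_ge i (n+1) with hin | hin <;>
            rcases Nat.lt_or_ge j (n+1) with hjn | hjn
          · rw [hb'eq i (by omega), hb'eq j (by omega)] at hij
            exact hinj i (by omega) j (by omega) hij
          · have hje : j = n+1 := by omega
            subst hje
            rw [hb'eq i (by omega), hb'top] at hij
            exact absurd hij (hrep i (by omega))
          · have hie : i = n+1 := by omega
            subst hie
            rw [hb'top, hb'eq j (by omega)] at hij
            exact absurd hij.symm (hrep j (by omega))
          · omega

/-- When every action has a single condition, an action is reachable iff there
is a chain of supporters that either ends (injectively) in an initial timed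
fluent, or ends in a self-supporting causal loop. -/
theorem stmt_9 {F A : Type*} [Fintype F] [Fintype A]
    (cond : A → Finset (ℤ × F)) (eff : A → F) (I : Finset (ℤ × F))
    (δc : A → ℤ) (fc : A → F)
    (hsingle : ∀ a : A, cond a = {(δc a, fc a)}) (a : A) :
    ReachableAction cond eff I a ↔
      ∃ (k : ℕ) (b : ℕ → A), b 0 = a ∧ (∀ i < k, eff (b (i+1)) = fc (b i)) ∧
        (((∀ i ≤ k, ∀ j ≤ k, b i = b j → i = j) ∧ ∃ t0 : ℤ, (t0, fc (b k)) ∈ I) ∨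
          ((∀ i < k, ∀ j < k, b i = b j → i = j) ∧
            ∃ j < k, b k = b j ∧ ∑ i ∈ Finset.Ico j k, (1 - δc (b i)) ≤ 0)) := by
  classical
  constructor
  · rintro ⟨S, t, hS, haS⟩
    exact forward_aux cond eff I δc fc hsingle S t hS a (Fintype.card A) 0
      (fun _ => a) (by omega) rfl (by simpa) (by omega) (by omega) (by omega)
  · rintro ⟨k, b, hb0, heff, hcase | hcase⟩
    · obtain ⟨hinj, t0, ht0⟩ := hcase
      set T : ℕ → ℤ := fun i => t0 - δc (b k) + ∑ m ∈ Finset.Ico i k, (1 - δc (b m)) with hT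
      refine ⟨(Finset.range (k+1)).image b,
        fun x => if h : ∃ i, i ≤ k ∧ b i = x then T h.choose else 0, ?_, ?_⟩
      · have htval : ∀ i ≤ k,
            (fun x => if h : ∃ i, i ≤ k ∧ b i = x then T h.choose else 0) (b i) = T i := by
          intro i hi
          have h : ∃ i', i' ≤ k ∧ b i' = b i := ⟨i, hi, rfl⟩
          simp only [dif_pos h]
          congr 1
          exact hinj h.choose h.choose_spec.1 i hi h.choose_spec.2
        intro x hx p hp
        rw [hsingle] at hp
        simp only [Finset.mem_singleton] at hp
        subst hp
        obtain ⟨i, hi, hbi⟩ := Finset.mem_image.mp hx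
        rw [Finset.mem_range] at hi
        subst hbi
        rcases eq_or_lt_of_le (Nat.lt_succ_iff.mp hi) with hik | hik
        · subst hik
          left
          refine ⟨t0, ht0, ?_⟩
          rw [htval _ le_rfl]
          simp [hT]
        · right
          refine ⟨b (i+1), Finset.mem_image.mpr ⟨i+1, Finset.mem_range.mpr (by omega), rfl⟩,
            heff i hik, ?_⟩
          rw [htval _ (by omega), htval _ (by omega)]
          have hsplit : ∑ m ∈ Finset.Ico i k, (1 - δc (b m))
              = (1 - δc (b i)) + ∑ m ∈ Finset.Ico (i+1) k, (1 - δc (b m)) :=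
            Finset.sum_eq_sum_Ico_succ_bot hik _
          simp only [hT]
          linarith
      · exact Finset.mem_image.mpr ⟨0, Finset.mem_range.mpr (by omega), hb0⟩
    · obtain ⟨hinj, j, hjk, hbk, hsum⟩ := hcase
      set T : ℕ → ℤ := fun i => ∑ m ∈ Finset.Ico i k, (1 - δc (b m)) with hT
      refine ⟨(Finset.range k).image b,
        fun x => if h : ∃ i, i < k ∧ b i = x then T h.choose else 0, ?_, ?_⟩
      · have htval : ∀ i < k,
            (fun x => if h : ∃ i, i < k ∧ b i = x then T h.choose else 0) (b i) = T i := by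
          intro i hi
          have h : ∃ i', i' < k ∧ b i' = b i := ⟨i, hi, rfl⟩
          simp only [dif_pos h]
          congr 1
          exact hinj h.choose h.choose_spec.1 i hi h.choose_spec.2
        intro x hx p hp
        rw [hsingle] at hp
        simp only [Finset.mem_singleton] at hp
        subst hp
        obtain ⟨i, hi, hbi⟩ := Finset.mem_image.mp hx
        rw [Finset.mem_range] at hi
        subst hbi
        right
        have hsplit : ∑ m ∈ Finset.Ico i k, (1 - δc (b m))
            = (1 - δc (b i)) + ∑ m ∈ Finset.Ico (i+1) k, (1 - δc (b m)) :=
          Finset.sum_eq_sum_Ico_succ_bot hi _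
        rcases Nat.lt_or_ge (i+1) k with hik | hik
        · refine ⟨b (i+1), Finset.mem_image.mpr ⟨i+1, Finset.mem_range.mpr hik, rfl⟩,
            heff i hi, ?_⟩
          rw [htval _ hik, htval _ hi]
          simp only [hT]
          linarith
        · have hie : i + 1 = k := by omega
          refine ⟨b j, Finset.mem_image.mpr ⟨j, Finset.mem_range.mpr hjk, rfl⟩, ?_, ?_⟩
          · rw [← hbk, ← hie]; exact heff i hi
          · rw [htval _ hjk, htval _ hi]
            have hempty : ∑ m ∈ Finset.Ico (i+1) k, (1 - δc (b m)) = 0 := by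
              rw [hie]; simp
            simp only [hT]
            linarith
      · exact Finset.mem_image.mpr ⟨0, Finset.mem_range.mpr (by omega), hb0⟩
end

section
/- If there is an integer c ≥ 1 such that f(v) ≥ c · depth(v) for every vertex v (so that each added action carries strictly positive cost in the evaluation function), then every vertex of T is expanded after finitely many steps of any best-first search run; i.e., best-first search with such an evaluation function methodically explores the possibly infinite search space and eventually reaches every node. -/
/-- Best-first search on a (possibly infinite) finitely-branching rooted tree,
with an evaluation function satisfying `f v ≥ c * depth v` for some constant
`c ≥ 1`, expands every vertex after finitely many steps. -/
theorem stmt_12 {V : Type*} [DecidableEq V]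
    (root : V) (children : V → Finset V) (depth : V → ℕ)
    (hroot_depth : depth root = 0)
    (hchild_depth : ∀ p : V, ∀ v ∈ children p, depth v = depth p + 1)
    (hroot_noparent : ∀ p : V, root ∉ children p)
    (hparent_unique : ∀ v : V, v ≠ root → ∃! p : V, v ∈ children p)
    (hreach : ∀ v : V, Relation.ReflTransGen (fun x y => y ∈ children x) root v)
    (f : V → ℕ) (c : ℕ) (hc : 1 ≤ c) (hf : ∀ v : V, c * depth v ≤ f v)
    (frontier : ℕ → Finset V) (u : ℕ → V)
    (h0 : frontier 0 = {root})
    (hrun : ∀ k : ℕ, (frontier k).Nonempty →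
      u k ∈ frontier k ∧ (∀ v ∈ frontier k, f (u k) ≤ f v) ∧
        frontier (k+1) = (frontier k).erase (u k) ∪ children (u k))
    (hempty : ∀ k : ℕ, frontier k = ∅ → frontier (k+1) = ∅) :
    ∀ v : V, ∃ k : ℕ, (frontier k).Nonempty ∧ u k = v := by
  -- if frontier (k+1) is nonempty, so was frontier k
  have hne_succ : ∀ k, (frontier (k+1)).Nonempty → (frontier k).Nonempty := by
    intro k h
    by_contra h'
    rw [Finset.not_nonempty_iff_eq_empty] at h'
    rw [hempty k h'] at h
    exact absurd h (by simp)
  -- how a vertex can be in frontier (k+1)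
  have hmem_succ : ∀ k v, v ∈ frontier (k+1) →
      (v ∈ frontier k ∧ u k ≠ v) ∨ ((frontier k).Nonempty ∧ v ∈ children (u k)) := by
    intro k v hv
    have hk : (frontier k).Nonempty := hne_succ k ⟨v, hv⟩
    obtain ⟨_, _, heq⟩ := hrun k hk
    rw [heq] at hv
    rcases Finset.mem_union.1 hv with h | h
    · exact Or.inl ⟨Finset.mem_of_mem_erase h, fun e => (Finset.ne_of_mem_erase h) e.symm⟩
    · exact Or.inr ⟨hk, h⟩
  -- depth 0 means root
  have hdepth_zero : ∀ w : V, depth w = 0 → w = root := by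
    intro w h
    by_contra hw
    obtain ⟨p, hp, -⟩ := hparent_unique w hw
    rw [hchild_depth p w hp] at h
    omega
  -- each depth level is finite
  have hlevel : ∀ d, {w : V | depth w = d}.Finite := by
    intro d
    induction d with
    | zero =>
      exact Set.Finite.subset (Set.finite_singleton root) (fun w hw => hdepth_zero w hw)
    | succ d ih =>
      have hsub : {w : V | depth w = d + 1} ⊆ ⋃ p ∈ {w : V | depth w = d}, ↑(children p) := by
        intro w hw
        simp only [Set.mem_setOf_eq] at hw
        have hwne : w ≠ root := by
          intro e; rw [e, hroot_depth] at hw; omega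
        obtain ⟨p, hp, -⟩ := hparent_unique w hwne
        have hdp : depth p = d := by
          have := hchild_depth p w hp; omega
        exact Set.mem_biUnion (show p ∈ {w : V | depth w = d} from hdp) hp
      exact Set.Finite.subset (Set.Finite.biUnion ih (fun p _ => (children p).finite_toSet)) hsub
  -- depth balls are finite
  have hball : ∀ D, {w : V | depth w ≤ D}.Finite := by
    intro D
    induction D with
    | zero =>
      exact Set.Finite.subset (hlevel 0) (fun w hw => Nat.le_zero.1 hw)
    | succ D ih =>
      have hsub : {w : V | depth w ≤ D + 1} ⊆ {w : V | depth w ≤ D} ∪ {w : V | depth w = D + 1} := by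
        intro w hw
        simp only [Set.mem_setOf_eq, Set.mem_union] at hw ⊢
        omega
      exact Set.Finite.subset (ih.union (hlevel (D + 1))) hsub
  -- a vertex never expanded stays in the frontier
  have hstay : ∀ j v, v ∈ frontier j →
      (∀ k, j ≤ k → ¬((frontier k).Nonempty ∧ u k = v)) →
      ∀ k, j ≤ k → v ∈ frontier k := by
    intro j v hv hnot k hk
    induction k, hk using Nat.le_induction with
    | base => exact hv
    | succ k hk ih =>
      have hne : (frontier k).Nonempty := ⟨v, ih⟩
      obtain ⟨-, -, heq⟩ := hrun k hne
      rw [heq]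
      exact Finset.mem_union_left _
        (Finset.mem_erase.2 ⟨fun e => hnot k hk ⟨hne, e.symm⟩, ih⟩)
  -- how a vertex first got into the frontier
  have hentry : ∀ k v, v ∈ frontier k →
      v = root ∨ ∃ s, s < k ∧ (frontier s).Nonempty ∧ v ∈ children (u s) := by
    intro k
    induction k with
    | zero =>
      intro v hv
      rw [h0] at hv
      exact Or.inl (Finset.mem_singleton.1 hv)
    | succ k ih =>
      intro v hv
      rcases hmem_succ k v hv with ⟨h1, -⟩ | ⟨hk, h2⟩
      · rcases ih v h1 with h | ⟨s, hs, h⟩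
        · exact Or.inl h
        · exact Or.inr ⟨s, by omega, h⟩
      · exact Or.inr ⟨k, Nat.lt_succ_self k, hk, h2⟩
  -- re-entry into the frontier comes from a parent expansion
  have hreenter : ∀ b a v, a < b → v ∉ frontier a → v ∈ frontier b →
      ∃ t, a ≤ t ∧ t < b ∧ (frontier t).Nonempty ∧ v ∈ children (u t) := by
    intro b
    induction b with
    | zero => intro a v hab _ _; omega
    | succ b ih =>
      intro a v hab ha hb
      by_cases hvb : v ∈ frontier b
      · have hab' : a < b := by
          rcases Nat.lt_succ_iff_lt_or_eq.1 hab with h | h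
          · exact h
          · subst h; exact absurd hvb ha
        obtain ⟨t, h1, h2, h3⟩ := ih a v hab' ha hvb
        exact ⟨t, h1, by omega, h3⟩
      · rcases hmem_succ b v hb with ⟨h1, -⟩ | ⟨hk, h2⟩
        · exact absurd h1 hvb
        · exact ⟨b, by omega, Nat.lt_succ_self b, hk, h2⟩
  -- no vertex is expanded twice
  have honce' : ∀ d w, depth w = d → ∀ k m, k < m →
      ((frontier k).Nonempty ∧ u k = w) → ((frontier m).Nonempty ∧ u m = w) → False := by
    intro d
    induction d using Nat.strong_induction_on with
    | _ d ih =>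
      intro w hd k m hkm hk hm
      have hwk : w ∈ frontier k := hk.2 ▸ (hrun k hk.1).1
      have hwm : w ∈ frontier m := hm.2 ▸ (hrun m hm.1).1
      have hnot : w ∉ frontier (k + 1) := by
        obtain ⟨-, -, heq⟩ := hrun k hk.1
        rw [heq]
        intro hmem
        rcases Finset.mem_union.1 hmem with h | h
        · exact (Finset.mem_erase.1 h).1 hk.2.symm
        · have := hchild_depth (u k) w h
          rw [hk.2] at this
          omega
      have hk1m : k + 1 < m := by
        rcases Nat.lt_or_ge (k + 1) m with h | h
        · exact h
        · have : m = k + 1 := by omega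
          rw [this] at hwm
          exact absurd hwm hnot
      obtain ⟨t, ht1, ht2, htne, htc⟩ := hreenter m (k + 1) w hk1m hnot hwm
      have hwroot : w ≠ root := fun e => hroot_noparent (u t) (e ▸ htc)
      obtain ⟨p, hp, hpuniq⟩ := hparent_unique w hwroot
      have hut : u t = p := hpuniq (u t) htc
      rcases hentry k w hwk with h | ⟨s, hs, hsne, hsc⟩
      · exact hwroot h
      have hus : u s = p := hpuniq (u s) hsc
      have hdp : depth p + 1 = d := by
        rw [← hd, hchild_depth p w hp]
      exact ih (depth p) (by omega) p rfl s t (by omega) ⟨hsne, hus⟩ ⟨htne, hut⟩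
  have honce : ∀ w k m, ((frontier k).Nonempty ∧ u k = w) →
      ((frontier m).Nonempty ∧ u m = w) → k = m := by
    intro w k m hk hm
    rcases lt_trichotomy k m with h | h | h
    · exact (honce' (depth w) w rfl k m h hk hm).elim
    · exact h
    · exact (honce' (depth w) w rfl m k h hm hk).elim
  -- any vertex in the frontier is eventually expanded
  have hexpand : ∀ j v, v ∈ frontier j → ∃ k, (frontier k).Nonempty ∧ u k = v := by
    intro j v hv
    by_contra hcon
    push_neg at hcon
    have hstayv : ∀ k, j ≤ k → v ∈ frontier k :=
      hstay j v hv (fun k _ h => hcon k h.1 h.2)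
    have hmaps : ∀ k, j ≤ k → depth (u k) ≤ f v := by
      intro k hk
      have hne : (frontier k).Nonempty := ⟨v, hstayv k hk⟩
      obtain ⟨-, hmin, -⟩ := hrun k hne
      have h1 : f (u k) ≤ f v := hmin v (hstayv k hk)
      have h2 : c * depth (u k) ≤ f (u k) := hf (u k)
      nlinarith
    have hinf : (Set.Ici j).Infinite := Set.Ici_infinite j
    apply hinf
    apply Set.Finite.of_finite_image (f := u)
    · exact (hball (f v)).subset (by rintro _ ⟨k, hk, rfl⟩; exact hmaps k hk)
    · intro a ha b hb he
      have hnea : (frontier a).Nonempty := ⟨v, hstayv a ha⟩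
      have hneb : (frontier b).Nonempty := ⟨v, hstayv b hb⟩
      exact honce (u a) a b ⟨hnea, rfl⟩ ⟨hneb, he.symm⟩
  -- conclude by induction along reachability
  intro v
  have hr := hreach v
  induction hr with
  | refl =>
    exact hexpand 0 root (by rw [h0]; exact Finset.mem_singleton_self root)
  | tail hab hbc ih =>
    obtain ⟨k, hkne, hku⟩ := ih
    obtain ⟨-, -, heq⟩ := hrun k hkne
    apply hexpand (k + 1)
    rw [heq]
    exact Finset.mem_union_right _ (by rw [hku]; exact hbc)
end
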